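/- arXiv:2402.19457 — 2 statements merged into one kernel-verified Lean document; each statement's English description precedes it below -/
import Mathlib

section
/- The Bayes error of predicting a finite-valued random variable C from an observation S, namely P_e = 1 - E_S[max_c p(c|S)], satisfies the two-sided bound 1 - sqrt(E_S[exp(-2 H₂(C|S))]) ≤ P_e ≤ 1 - E_S[exp(-2 H₂(C|S))], where H₂(C|s) = -(1/2) log Σ_c p(c|s)² is the conditional second-order Rényi entropy. -/
/-! For each observation `s` write `f s = ∑_c p(c|s)²` (the collision probability, equal to
`exp(-2 H₂(C|s))`) and `M s = max_c p(c|s)`. Pointwise `M² ≤ f ≤ M`: the first because the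
maximum is one of the summands, the second because `∑ p² ≤ (max p) ∑ p = max p`. Averaging
`f ≤ M` over `S` gives the upper bound on `P_e`; averaging `M ≤ √f` and applying Jensen's
inequality to the concave square root gives the lower bound. -/

open Finset Real

lemma Finset.sum_sq_le_sum_mul_sup' {ι : Type*} {s : Finset ι} (hs : s.Nonempty) {p : ι → ℝ}
    (hp : ∀ i ∈ s, 0 ≤ p i) : ∑ i ∈ s, p i ^ 2 ≤ (∑ i ∈ s, p i) * s.sup' hs p := by
  rw [sum_mul]
  refine sum_le_sum fun i hi => ?_
  rw [sq]
  exact mul_le_mul_of_nonneg_left (le_sup' p hi) (hp i hi)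

lemma Finset.sup'_le_sqrt_sum_sq {ι : Type*} {s : Finset ι} (hs : s.Nonempty) (p : ι → ℝ) :
    s.sup' hs p ≤ √(∑ i ∈ s, p i ^ 2) := by
  obtain ⟨i, hi, hmax⟩ := exists_mem_eq_sup' hs p
  rw [hmax]
  exact (le_abs_self _).trans
    (abs_le_sqrt (single_le_sum (f := fun j => p j ^ 2) (fun j _ => sq_nonneg _) hi))

lemma Finset.sum_sq_pos_of_sum_ne_zero {ι : Type*} {s : Finset ι} {p : ι → ℝ}
    (hp : ∑ i ∈ s, p i ≠ 0) : 0 < ∑ i ∈ s, p i ^ 2 := by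
  obtain ⟨i, hi, hpi⟩ := exists_ne_zero_of_sum_ne_zero hp
  exact sum_pos' (fun j _ => sq_nonneg _) ⟨i, hi, by positivity⟩

lemma Real.sum_mul_sqrt_le_sqrt_sum_mul {ι : Type*} {s : Finset ι} {w x : ι → ℝ}
    (hw : ∀ i ∈ s, 0 ≤ w i) (hw1 : ∑ i ∈ s, w i = 1) (hx : ∀ i ∈ s, 0 ≤ x i) :
    ∑ i ∈ s, w i * √(x i) ≤ √(∑ i ∈ s, w i * x i) :=
  strictConcaveOn_sqrt.concaveOn.le_map_sum hw hw1 hx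

lemma Real.exp_neg_two_mul_neg_half_mul_log {x : ℝ} (hx : 0 < x) :
    exp (-2 * (-(1 / 2) * log x)) = x := by
  rw [show -2 * (-(1 / 2) * log x) = log x by ring, exp_log hx]

/-- Two-sided bound on the Bayes error `P_e = 1 - E_S[max_c p(c|S)]` in terms of the
conditional second-order Rényi entropy `H₂(C|s) = -(1/2) log ∑_c p(c|s)²`:
`1 - sqrt(E_S[exp(-2H₂(C|S))]) ≤ P_e ≤ 1 - E_S[exp(-2H₂(C|S))]`. -/
theorem stmt3 {C S : Type*} [Fintype C] [Nonempty C] [Fintype S]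
    (q : S → ℝ) (hq0 : ∀ s, 0 ≤ q s) (hq1 : ∑ s, q s = 1)
    (p : S → C → ℝ) (hp0 : ∀ s c, 0 ≤ p s c) (hp1 : ∀ s, ∑ c, p s c = 1) :
    1 - Real.sqrt (∑ s, q s * Real.exp (-2 * (-(1 / 2) * Real.log (∑ c, (p s c) ^ 2))))
      ≤ 1 - ∑ s, q s * Finset.univ.sup' Finset.univ_nonempty (p s)
    ∧ 1 - ∑ s, q s * Finset.univ.sup' Finset.univ_nonempty (p s)
      ≤ 1 - ∑ s, q s * Real.exp (-2 * (-(1 / 2) * Real.log (∑ c, (p s c) ^ 2))) := by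
  have hcollision : ∀ s, exp (-2 * (-(1 / 2) * log (∑ c, p s c ^ 2))) = ∑ c, p s c ^ 2 :=
    fun s => exp_neg_two_mul_neg_half_mul_log (sum_sq_pos_of_sum_ne_zero (by simp [hp1 s]))
  simp only [hcollision]
  constructor
  · have hmax_le_sqrt :
        ∑ s, q s * univ.sup' univ_nonempty (p s) ≤ ∑ s, q s * √(∑ c, p s c ^ 2) :=
      sum_le_sum fun s _ => mul_le_mul_of_nonneg_left (sup'_le_sqrt_sum_sq _ _) (hq0 s)
    have hjensen : ∑ s, q s * √(∑ c, p s c ^ 2) ≤ √(∑ s, q s * ∑ c, p s c ^ 2) :=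
      sum_mul_sqrt_le_sqrt_sum_mul (fun s _ => hq0 s) hq1
        fun s _ => sum_nonneg fun c _ => sq_nonneg _
    linarith
  · have hcollision_le_max :
        ∑ s, q s * ∑ c, p s c ^ 2 ≤ ∑ s, q s * univ.sup' univ_nonempty (p s) :=
      sum_le_sum fun s _ => mul_le_mul_of_nonneg_left
        (by simpa [hp1 s] using sum_sq_le_sum_mul_sup' univ_nonempty fun c _ => hp0 s c) (hq0 s)
    linarith
end

section
/- The Bayes error P_e of predicting a finite-valued random variable C from an observation S satisfies P_e ≤ 1 - exp(-H(C|S)), where H(C|S) = E_S[H(C|S=s)] is the conditional Shannon entropy. -/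
/-!
Rényi's min-entropy `-log max_c p(c)` is at most the Shannon entropy, so `exp (-H(C|S=s))` is
at most `max_c p(c|s)`. Averaging over `S` and using the convexity of `exp` (Jensen) turns
`E_S[exp (-H(C|S=s))] ≤ E_S[max_c p(c|S)]` into the bound with `exp (-H(C|S))`.
-/

open Real Finset

theorem Real.sum_mul_log_le_log_sup' {ι : Type*} {s : Finset ι} (hs : s.Nonempty) {p : ι → ℝ}
    (hp0 : ∀ i ∈ s, 0 ≤ p i) (hp1 : ∑ i ∈ s, p i = 1) :
    ∑ i ∈ s, p i * log (p i) ≤ log (s.sup' hs p) :=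
  calc ∑ i ∈ s, p i * log (p i) ≤ ∑ i ∈ s, p i * log (s.sup' hs p) := by
        refine sum_le_sum fun i hi => ?_
        rcases (hp0 i hi).eq_or_lt with hpi | hpi
        · simp [← hpi]
        · exact mul_le_mul_of_nonneg_left (log_le_log hpi (le_sup' p hi)) hpi.le
    _ = log (s.sup' hs p) := by rw [← sum_mul, hp1, one_mul]

theorem Real.exp_sum_mul_log_le_sup' {ι : Type*} {s : Finset ι} (hs : s.Nonempty) {p : ι → ℝ}
    (hp0 : ∀ i ∈ s, 0 ≤ p i) (hp1 : ∑ i ∈ s, p i = 1) :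
    exp (∑ i ∈ s, p i * log (p i)) ≤ s.sup' hs p := by
  obtain ⟨i, hi, hpi⟩ : ∃ i ∈ s, 0 < p i :=
    exists_lt_of_sum_lt (f := 0) (by simp [hp1])
  exact (le_log_iff_exp_le (hpi.trans_le (le_sup' p hi))).1 (sum_mul_log_le_log_sup' hs hp0 hp1)

/-- The Bayes error `P_e = 1 - E_S[max_c p(c|S)]` satisfies
`P_e ≤ 1 - exp(-H(C|S))` where `H(C|S) = E_S[-∑_c p(c|s) log p(c|s)]`
is the conditional Shannon entropy. -/
theorem stmt4 {C S : Type*} [Fintype C] [Nonempty C] [Fintype S]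
    (q : S → ℝ) (hq0 : ∀ s, 0 ≤ q s) (hq1 : ∑ s, q s = 1)
    (p : S → C → ℝ) (hp0 : ∀ s c, 0 ≤ p s c) (hp1 : ∀ s, ∑ c, p s c = 1) :
    1 - ∑ s, q s * Finset.univ.sup' Finset.univ_nonempty (p s)
      ≤ 1 - Real.exp (-(∑ s, q s * (-∑ c, p s c * Real.log (p s c)))) := by
  rw [sub_le_sub_iff_left]
  calc exp (-(∑ s, q s * (-∑ c, p s c * log (p s c))))
      = exp (∑ s, q s • ∑ c, p s c * log (p s c)) := by simp [smul_eq_mul]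
    _ ≤ ∑ s, q s • exp (∑ c, p s c * log (p s c)) :=
        convexOn_exp.map_sum_le (fun s _ => hq0 s) hq1 (fun s _ => Set.mem_univ _)
    _ ≤ ∑ s, q s * univ.sup' univ_nonempty (p s) := by
        refine sum_le_sum fun s _ => mul_le_mul_of_nonneg_left ?_ (hq0 s)
        exact exp_sum_mul_log_le_sup' univ_nonempty (fun c _ => hp0 s c) (hp1 s)
end
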